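/- arXiv:1810.09211 — 3 statements merged into one kernel-verified Lean document; each statement's English description precedes it below -/
import Mathlib

section
/- Let v : ℝ² → ℝ be continuously differentiable on an open set containing T. Then sin∠(S',S'') · ∫_{S'} v φ_z dH¹ = ∫_T ( φ_z(x) · ⟨∇v(x), μ''⟩ + |S''|⁻¹ · v(x) ) dx. (This is the exact divergence-theorem identity underlying the scaled trace inequality (4a) of the paper.) -/
/-!
Parametrize `T` by `p ↦ z + p.1 • (z'' - z) + p.2 • (z' - z)` on the standard triangle; the
Jacobian is `‖z' - z‖ * ‖z'' - z‖ * sin ∠(S', S'')`. Since `φ` drops by `1` along `z' - z`, the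
integrand is `-|S''|⁻¹` times the derivative of `v φ` in the direction `z' - z`. Integrating along
the lines parallel to `S''` (Fubini and the fundamental theorem of calculus), `v φ` vanishes at the
far end on `S`, and what remains is the trace of `v φ` on `S'`, whose parametrization by `[0, 1]`
has speed `|S'|`.
-/

open MeasureTheory
open scoped RealInnerProductSpace ENNReal

open Set InnerProductGeometry

theorem AffineIndependent.linearIndependent_vsub_pair {k V P : Type*} [Ring k] [AddCommGroup V]
    [Module k V] [AddTorsor V P] {p₀ p₁ p₂ : P} (h : AffineIndependent k ![p₀, p₁, p₂]) :
    LinearIndependent k ![p₁ -ᵥ p₀, p₂ -ᵥ p₀] := by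
  rw [affineIndependent_iff_linearIndependent_vsub k _ 0] at h
  convert h.comp (fun i : Fin 2 => (⟨i.succ, i.succ_ne_zero⟩ : {x : Fin 3 // x ≠ 0}))
    fun i j hij => Fin.succ_injective _ (congrArg Subtype.val hij) using 1
  ext i
  fin_cases i <;> rfl

section AffineMap

variable {E F : Type*} [NormedAddCommGroup E] [NormedSpace ℝ E] [FiniteDimensional ℝ E]
  [NormedAddCommGroup F] [NormedSpace ℝ F]

theorem AffineMap.hasFDerivAt_of_finiteDimensional (φ : E →ᵃ[ℝ] F) (x : E) :
    HasFDerivAt φ (LinearMap.toContinuousLinearMap φ.linear) x :=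
  (⟨φ, φ.continuous_of_finiteDimensional⟩ : E →ᴬ[ℝ] F).hasFDerivAt

theorem AffineMap.contDiff_of_finiteDimensional {n : WithTop ℕ∞} (φ : E →ᵃ[ℝ] F) :
    ContDiff ℝ n φ :=
  (⟨φ, φ.continuous_of_finiteDimensional⟩ : E →ᴬ[ℝ] F).contDiff

end AffineMap

theorem fderiv_mul_affineMap_apply {E : Type*} [NormedAddCommGroup E] [InnerProductSpace ℝ E]
    [FiniteDimensional ℝ E] {v : E → ℝ} {x : E} (hv : DifferentiableAt ℝ v x)
    (φ : E →ᵃ[ℝ] ℝ) (e : E) :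
    fderiv ℝ (fun y => v y * φ y) x e = φ x * ⟪gradient v x, e⟫ + φ.linear e * v x := by
  rw [(hv.hasFDerivAt.fun_mul (φ.hasFDerivAt_of_finiteDimensional x)).fderiv, inner_gradient_left]
  simp only [add_apply, smul_apply, smul_eq_mul, LinearMap.coe_toContinuousLinearMap']
  ring

section Segment

variable {E F : Type*} [NormedAddCommGroup E] [NormedSpace ℝ E] [MeasurableSpace E] [BorelSpace E]
  [NormedAddCommGroup F] [NormedSpace ℝ F]

theorem restrict_segment_hausdorffMeasure_eq_map (x y : E) :
    (μH[1] : Measure E).restrict (segment ℝ x y) =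
      Measure.map (AffineMap.lineMap x y)
        ((nndist x y : ℝ≥0∞) • volume.restrict (Icc (0:ℝ) 1)) := by
  ext s hs
  rw [Measure.map_apply (AffineMap.lineMap_continuous).measurable hs, Measure.restrict_apply hs,
    Measure.smul_apply, Measure.restrict_apply' measurableSet_Icc, segment_eq_image_lineMap,
    inter_comm, ← image_inter_preimage, hausdorffMeasure_lineMap_image, hausdorffMeasure_real,
    inter_comm, ENNReal.smul_def]

theorem integral_segment_hausdorffMeasure (x y : E) (f : E → F) :
    ∫ p in segment ℝ x y, f p ∂μH[1] = dist x y • ∫ t in (0:ℝ)..1, f (x + t • (y - x)) := by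
  rcases eq_or_ne x y with rfl | hxy
  · rw [Measure.restrict_eq_zero.2 (by rw [hausdorffMeasure_segment, edist_self]),
      integral_zero_measure, dist_self, zero_smul]
  have hL : MeasurableEmbedding (AffineMap.lineMap x y : ℝ → E) := by
    have h := (Homeomorph.addRight x).isClosedEmbedding.comp
      (isClosedEmbedding_smul_left (𝕜 := ℝ) (sub_ne_zero.2 hxy.symm))
    convert h.measurableEmbedding using 1
    ext t
    simp [AffineMap.lineMap_apply_module']
  rw [restrict_segment_hausdorffMeasure_eq_map, hL.integral_map, integral_smul_measure,
    intervalIntegral.integral_of_le zero_le_one, ← integral_Icc_eq_integral_Ioc]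
  simp only [AffineMap.lineMap_apply_module', add_comm, ENNReal.coe_toReal, coe_nndist]

end Segment

def stdTriangle : Set (ℝ × ℝ) := {p | 0 ≤ p.1 ∧ 0 ≤ p.2 ∧ p.1 + p.2 ≤ 1}

theorem mk_mem_stdTriangle {t s : ℝ} :
    (t, s) ∈ stdTriangle ↔ t ∈ Icc (0:ℝ) 1 ∧ s ∈ Icc 0 (1 - t) := by
  constructor
  · rintro ⟨h₁, h₂, h₃⟩
    exact ⟨⟨h₁, by dsimp at *; linarith⟩, h₂, by dsimp at *; linarith⟩
  · rintro ⟨⟨h₁, -⟩, h₂, h₃⟩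
    exact ⟨h₁, h₂, by dsimp; linarith⟩

theorem isCompact_stdTriangle : IsCompact stdTriangle := by
  refine (isCompact_Icc (a := ((0:ℝ), (0:ℝ))) (b := (1, 1))).of_isClosed_subset ?_ ?_
  · exact (isClosed_le continuous_const continuous_fst).inter
      ((isClosed_le continuous_const continuous_snd).inter
        (isClosed_le (continuous_fst.add continuous_snd) continuous_const))
  · rintro ⟨t, s⟩ ⟨h₁, h₂, h₃⟩
    exact ⟨⟨h₁, h₂⟩, by dsimp at *; constructor <;> linarith⟩

theorem convexHull_stdTriangle_vertices :
    convexHull ℝ {((0:ℝ), (0:ℝ)), (1, 0), (0, 1)} = stdTriangle := by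
  refine subset_antisymm (convexHull_min ?_ ?_) fun p ⟨h₁, h₂, h₃⟩ => ?_
  · simp [insert_subset_iff, stdTriangle]
  · intro p ⟨hp₁, hp₂, hp₃⟩ q ⟨hq₁, hq₂, hq₃⟩ a b ha hb hab
    refine ⟨?_, ?_, ?_⟩ <;> dsimp <;> nlinarith
  · have := (convex_convexHull ℝ {((0:ℝ), (0:ℝ)), (1, 0), (0, 1)}).sum_mem (t := Finset.univ)
      (w := ![1 - p.1 - p.2, p.1, p.2]) (z := ![(0, 0), (1, 0), (0, 1)])
      (by simp [Fin.forall_fin_succ]; refine ⟨?_, h₁, h₂⟩; linarith)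
      (by simp [Fin.sum_univ_three]; ring)
      (fun i _ => subset_convexHull ℝ _ (by fin_cases i <;> simp))
    convert this
    ext <;> simp [Fin.sum_univ_three]

theorem integral_stdTriangle_eq_integral_sub {g g' : ℝ × ℝ → ℝ}
    (hg : ∀ p ∈ stdTriangle, HasDerivAt (fun s => g (p.1, s)) (g' p) p.2)
    (hg' : ContinuousOn g' stdTriangle) :
    ∫ p in stdTriangle, g' p = ∫ t in (0:ℝ)..1, (g (t, 1 - t) - g (t, 0)) := by
  have hmeas : MeasurableSet stdTriangle := isCompact_stdTriangle.isClosed.measurableSet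
  have hint : Integrable (stdTriangle.indicator g') (volume.prod volume) :=
    (integrable_indicator_iff hmeas).2 (hg'.integrableOn_compact isCompact_stdTriangle)
  have hslice (t : ℝ) : ∫ s, stdTriangle.indicator g' (t, s) =
      (Icc 0 1).indicator (fun t => g (t, 1 - t) - g (t, 0)) t := by
    by_cases ht : t ∈ Icc (0:ℝ) 1
    · have hsub : MapsTo (fun s => (t, s)) (uIcc 0 (1 - t)) stdTriangle := fun s hs =>
        mk_mem_stdTriangle.2 ⟨ht, by rwa [uIcc_of_le (by linarith [ht.2])] at hs⟩
      have hrestr : (fun s => stdTriangle.indicator g' (t, s)) =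
          (Icc 0 (1 - t)).indicator fun s => g' (t, s) := by
        ext s
        simp only [indicator, mk_mem_stdTriangle, ht, true_and]
      have hftc : ∫ s in (0:ℝ)..(1 - t), g' (t, s) = g (t, 1 - t) - g (t, 0) :=
        intervalIntegral.integral_eq_sub_of_hasDerivAt (f := fun s => g (t, s))
          (fun s hs => hg _ (hsub hs))
          ((hg'.comp (Continuous.prodMk_right t).continuousOn hsub).intervalIntegrable)
      rw [hrestr, integral_indicator measurableSet_Icc, integral_Icc_eq_integral_Ioc,
        ← intervalIntegral.integral_of_le (by linarith [ht.2]), indicator_of_mem ht, hftc]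
    · simp [mk_mem_stdTriangle, ht]
  calc ∫ p in stdTriangle, g' p
      = ∫ p, stdTriangle.indicator g' p := (integral_indicator hmeas).symm
    _ = ∫ t, ∫ s, stdTriangle.indicator g' (t, s) := by
        rw [Measure.volume_eq_prod]; exact integral_prod _ hint
    _ = ∫ t in (0:ℝ)..1, (g (t, 1 - t) - g (t, 0)) := by
        simp_rw [hslice]
        rw [integral_indicator measurableSet_Icc, integral_Icc_eq_integral_Ioc,
          ← intervalIntegral.integral_of_le zero_le_one]

local notation "ℝ²" => EuclideanSpace ℝ (Fin 2)

theorem abs_det_eq_norm_mul_norm_mul_sin_angle (a b : ℝ²) :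
    |!![a 0, b 0; a 1, b 1].det| = ‖a‖ * ‖b‖ * Real.sin (angle a b) := by
  rw [mul_comm (‖a‖ * ‖b‖), sin_angle_mul_norm_mul_norm, ← Real.sqrt_sq_eq_abs,
    Matrix.det_fin_two_of]
  congr 1
  simp only [PiLp.inner_apply, RCLike.inner_apply, conj_trivial, Fin.sum_univ_two]
  ring

def planeChart (z a b : ℝ²) : ℝ × ℝ →ᵃ[ℝ] ℝ² where
  toFun p := z + p.1 • a + p.2 • b
  linear := (LinearMap.fst ℝ ℝ ℝ).smulRight a + (LinearMap.snd ℝ ℝ ℝ).smulRight b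
  map_vadd' p q := by
    simp only [vadd_eq_add, Prod.fst_add, Prod.snd_add, LinearMap.add_apply,
      LinearMap.smulRight_apply, LinearMap.fst_apply, LinearMap.snd_apply]
    module

@[simp]
theorem planeChart_apply (z a b : ℝ²) (p : ℝ × ℝ) :
    planeChart z a b p = z + p.1 • a + p.2 • b := rfl

theorem setIntegral_image_planeChart {F : Type*} [NormedAddCommGroup F] [NormedSpace ℝ F]
    {z a b : ℝ²} (hab : LinearIndependent ℝ ![a, b]) {s : Set (ℝ × ℝ)} (hs : MeasurableSet s)
    (f : ℝ² → F) :
    ∫ x in planeChart z a b '' s, f x =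
      (‖a‖ * ‖b‖ * Real.sin (angle a b)) • ∫ p in s, f (planeChart z a b p) := by
  let χ : ℝ² ≃ᵐ ℝ × ℝ := (MeasurableEquiv.toLp 2 (Fin 2 → ℝ)).symm.trans MeasurableEquiv.finTwoArrow
  have hχ : MeasurePreserving χ := (volume_preserving_finTwoArrow ℝ).comp
    (EuclideanSpace.volume_preserving_symm_measurableEquiv_toLp (Fin 2))
  let B : ℝ² →L[ℝ] ℝ² := (EuclideanSpace.proj 0).smulRight a + (EuclideanSpace.proj 1).smulRight b
  have hB (x : ℝ²) : z + B x = planeChart z a b (χ x) := (add_assoc _ _ _).symm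
  have hdet : B.det = !![a 0, b 0; a 1, b 1].det := by
    rw [ContinuousLinearMap.det,
      ← LinearMap.det_toMatrix (EuclideanSpace.basisFun (Fin 2) ℝ).toBasis]
    congr 1
    ext i j
    fin_cases i <;> fin_cases j <;> simp [B, LinearMap.toMatrix_apply]
  have hinj : InjOn (fun x => z + B x) (χ ⁻¹' s) := by
    intro x _ y _ hxy
    have h : x 0 • a + x 1 • b = y 0 • a + y 1 • b := by simpa [B] using hxy
    obtain ⟨h₀, h₁⟩ := LinearIndependent.pair_iff.1 hab (x 0 - y 0) (x 1 - y 1) (by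
      rw [sub_smul, sub_smul]; linear_combination (norm := module) h)
    ext i; fin_cases i <;> simp <;> linarith
  have himage : planeChart z a b '' s = (fun x => z + B x) '' (χ ⁻¹' s) := by
    simp only [hB]
    rw [← image_image (planeChart z a b) χ, image_preimage_eq s χ.surjective]
  rw [himage, integral_image_eq_integral_abs_det_fderiv_smul volume (χ.measurable hs)
      (fun x _ => (B.hasFDerivAt.const_add z).hasFDerivWithinAt) hinj, integral_smul, hdet,
    abs_det_eq_norm_mul_norm_mul_sin_angle]
  simp only [hB]
  exact congrArg _
    (hχ.setIntegral_preimage_emb χ.measurableEmbedding (fun p => f (planeChart z a b p)) s)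

theorem image_planeChart_stdTriangle (z a b : ℝ²) :
    planeChart z a b '' stdTriangle = convexHull ℝ {z, z + a, z + b} := by
  rw [← convexHull_stdTriangle_vertices, AffineMap.image_convexHull]
  simp [image_insert_eq]

theorem hasDerivAt_planeChart_snd (z a b : ℝ²) (p : ℝ × ℝ) :
    HasDerivAt (fun s => planeChart z a b (p.1, s)) b p.2 := by
  simpa using ((hasDerivAt_id p.2).smul_const b).const_add (z + p.1 • a)

theorem integral_fderiv_convexHull_triangle {z a b : ℝ²} (hab : LinearIndependent ℝ ![a, b])
    {f : ℝ² → ℝ} {U : Set ℝ²} (hU : IsOpen U) (hTU : convexHull ℝ {z, z + a, z + b} ⊆ U)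
    (hf : ContDiffOn ℝ 1 f U) :
    ∫ x in convexHull ℝ {z, z + a, z + b}, fderiv ℝ f x b =
      ‖a‖ * ‖b‖ * Real.sin (angle a b) *
        ∫ t in (0:ℝ)..1, (f (z + t • a + (1 - t) • b) - f (z + t • a)) := by
  set P := planeChart z a b
  have hPU : MapsTo P stdTriangle U := fun p hp =>
    hTU (image_planeChart_stdTriangle z a b ▸ mem_image_of_mem P hp)
  have hderiv (p : ℝ × ℝ) (hp : p ∈ stdTriangle) :
      HasDerivAt (fun s => f (P (p.1, s))) (fderiv ℝ f (P p) b) p.2 :=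
    ((hf.differentiableOn one_ne_zero).differentiableAt (hU.mem_nhds (hPU hp))).hasFDerivAt
      |>.comp_hasDerivAt p.2 (hasDerivAt_planeChart_snd z a b p)
  have hcont : ContinuousOn (fun p => fderiv ℝ f (P p) b) stdTriangle :=
    ((hf.continuousOn_fderiv_of_isOpen hU le_rfl).comp
      P.continuous_of_finiteDimensional.continuousOn hPU).clm_apply continuousOn_const
  rw [← image_planeChart_stdTriangle, setIntegral_image_planeChart hab
    isCompact_stdTriangle.isClosed.measurableSet, smul_eq_mul,
    integral_stdTriangle_eq_integral_sub (g := fun p => f (P p)) hderiv hcont]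
  simp [P]

/-- The exact divergence-theorem identity underlying the scaled trace inequality (4a):
for a triangle `T = conv {z, z', z''}` with hat function `φ` at `z`, unit vector
`μ'' = (z - z')/‖z - z'‖` along the edge `S'' = [z, z']`, and `v` continuously
differentiable on an open set containing `T`,
`sin∠(S',S'') ⬝ ∫_{S'} v φ dH¹ = ∫_T (φ ⬝ ⟨∇v, μ''⟩ + |S''|⁻¹ v)`. -/
theorem divergence_identity_hat_trace
    (z z' z'' : EuclideanSpace ℝ (Fin 2))
    (hind : AffineIndependent ℝ ![z, z', z''])
    (T : Set (EuclideanSpace ℝ (Fin 2)))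
    (hT : T = convexHull ℝ {z, z', z''})
    (φ : EuclideanSpace ℝ (Fin 2) →ᵃ[ℝ] ℝ)
    (hφz : φ z = 1) (hφz' : φ z' = 0) (hφz'' : φ z'' = 0)
    (μ'' : EuclideanSpace ℝ (Fin 2))
    (hμ'' : μ'' = ‖z - z'‖⁻¹ • (z - z'))
    (v : EuclideanSpace ℝ (Fin 2) → ℝ)
    (U : Set (EuclideanSpace ℝ (Fin 2)))
    (hU : IsOpen U) (hTU : T ⊆ U) (hv : ContDiffOn ℝ 1 v U) :
    Real.sin (EuclideanGeometry.angle z' z z'') *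
        ∫ x in segment ℝ z z'', v x * φ x ∂(μH[1]) =
      ∫ x in T, (φ x * ⟪gradient v x, μ''⟫ + (dist z z')⁻¹ * v x) := by
  have hli : LinearIndependent ℝ ![z'' - z, z' - z] := hind.comm_right.linearIndependent_vsub_pair
  have hTchart : T = convexHull ℝ {z, z + (z'' - z), z + (z' - z)} := by
    rw [hT, add_sub_cancel, add_sub_cancel, pair_comm z']
  have hz : ‖z' - z‖ ≠ 0 := norm_ne_zero_iff.2 (hli.ne_zero 1)
  have hφ : φ.linear (z' - z) = -1 := by
    rw [← vsub_eq_sub, φ.linearMap_vsub, hφz', hφz, vsub_eq_sub, zero_sub]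
  have hintegrand : ∀ x ∈ T, φ x * ⟪gradient v x, μ''⟫ + (dist z z')⁻¹ * v x =
      -‖z' - z‖⁻¹ * fderiv ℝ (fun y => v y * φ y) x (z' - z) := fun x hx => by
    rw [fderiv_mul_affineMap_apply
      ((hv.differentiableOn one_ne_zero).differentiableAt (hU.mem_nhds (hTU hx))), hφ, hμ'',
      dist_eq_norm, norm_sub_rev z z', ← neg_sub z' z, inner_smul_right, inner_neg_right]
    ring
  have hedge (t : ℝ) : φ (z + t • (z'' - z) + (1 - t) • (z' - z)) = 0 := by
    rw [show z + t • (z'' - z) + (1 - t) • (z' - z) = AffineMap.lineMap z' z'' t by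
      rw [AffineMap.lineMap_apply_module']; module, φ.apply_lineMap, hφz', hφz'',
      AffineMap.lineMap_same_apply]
  rw [setIntegral_congr_fun (hT ▸ ((toFinite _).isCompact_convexHull ℝ).isClosed.measurableSet)
      hintegrand, integral_const_mul, hTchart, integral_fderiv_convexHull_triangle hli hU
      (hTchart ▸ hTU) (hv.mul φ.contDiff_of_finiteDimensional.contDiffOn),
    integral_segment_hausdorffMeasure]
  simp only [hedge, mul_zero, zero_sub, intervalIntegral.integral_neg, mul_neg, smul_eq_mul]
  rw [EuclideanGeometry.angle, vsub_eq_sub, vsub_eq_sub, angle_comm, dist_comm, dist_eq_norm]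
  field_simp
end

section
/- For t ∈ [0,1] set a_t := z'' + t(z − z'') ∈ S' and b_t := z' + t(z − z') ∈ S''. Then for every function f : ℝ² → ℝ that is continuous on T, ∫₀¹ ( ∫_{[b_t, a_t]} f dH¹ ) dt = (|S| / (2|T|)) · ∫_T f(x) dx, where [b_t, a_t] is the segment joining b_t and a_t (which lies in T and is parallel to S). (This Fubini-type slicing identity is the key measure-theoretic step in the averaging argument proving inequality (4b) of the paper.) -/
/-!
The chart `(t, σ) ↦ lineMap (b t) (a t) σ` sweeps the unit square onto `T`, one segment
`[b t, a t]` per `t`. It is `z'` plus a linear map `A` (sending the basis to `z - z'`, `z'' - z'`)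
after Duffy's map `(t, σ) ↦ (t, σ (1 - t))`, so its Jacobian is `|det A| (1 - t)`. The segment
`[b t, a t]` has length `(1 - t) |S|`, so after change of variables and Fubini both sides equal
`|S| ∫₀¹ (1 - t) ∫₀¹ f dσ dt`; taking `f = 1` gives `|T| = |det A| / 2`.
-/

open MeasureTheory Set AffineMap
open scoped NNReal

theorem dist_lineMap_lineMap_same_right {E : Type*} [NormedAddCommGroup E] [NormedSpace ℝ E]
    (x y z : E) (t : ℝ) :
    dist (lineMap x z t) (lineMap y z t) = |1 - t| * dist x y := by
  rw [dist_eq_norm, dist_eq_norm, ← Real.norm_eq_abs, ← norm_smul]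
  congr 1
  simp only [lineMap_apply_module]
  module

section Segment

variable {E F : Type*} [NormedAddCommGroup E] [NormedSpace ℝ E] [MeasurableSpace E] [BorelSpace E]
  [NormedAddCommGroup F] [NormedSpace ℝ F]

theorem measurableEmbedding_lineMap {x y : E} (h : x ≠ y) :
    MeasurableEmbedding (lineMap x y : ℝ → E) :=
  ((antilipschitzWith_lineMap h).isClosedEmbedding
    (lipschitzWith_lineMap x y).uniformContinuous).measurableEmbedding

theorem hausdorffMeasure_restrict_segment (x y : E) :
    (μH[1] : Measure E).restrict (segment ℝ x y) =
      nndist x y • (volume.restrict (Icc (0 : ℝ) 1)).map (lineMap x y) := by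
  ext B hB
  rw [Measure.restrict_apply hB, Measure.smul_apply, Measure.map_apply (by fun_prop) hB,
    Measure.restrict_apply (by measurability), ← hausdorffMeasure_real,
    ← hausdorffMeasure_lineMap_image, image_preimage_inter, segment_eq_image_lineMap]

theorem setIntegral_segment_hausdorffMeasure (x y : E) (f : E → F) :
    ∫ p in segment ℝ x y, f p ∂μH[1] = dist x y • ∫ s in Icc (0 : ℝ) 1, f (lineMap x y s) := by
  rw [hausdorffMeasure_restrict_segment, integral_smul_nnreal_measure, NNReal.smul_def,
    coe_nndist]
  rcases eq_or_ne x y with rfl | h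
  · simp
  · rw [(measurableEmbedding_lineMap h).integral_map]

end Segment

theorem AffineIndependent.linearIndependent_sub_three {k V : Type*} [CommRing k] [AddCommGroup V]
    [Module k V] {x y w : V} (h : AffineIndependent k ![x, y, w]) :
    LinearIndependent k ![x - y, w - y] := by
  refine LinearIndependent.pair_iff.2 fun a b hab => ?_
  have := affineIndependent_iff.1 h Finset.univ ![a, -(a + b), b] (by simp [Fin.sum_univ_three])
    (by rw [← hab]; simp [Fin.sum_univ_three]; module)
  exact ⟨this 0 (by simp), this 2 (by simp)⟩

local notation "ℝ²" => EuclideanSpace ℝ (Fin 2)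

theorem setIntegral_euclideanSpace_fin_two {F : Type*} [NormedAddCommGroup F] [NormedSpace ℝ F]
    (g : ℝ × ℝ → F) (s t : Set ℝ) :
    ∫ p in {p : ℝ² | p 0 ∈ s ∧ p 1 ∈ t}, g (p 0, p 1) = ∫ q in s ×ˢ t, g q :=
  ((volume_preserving_finTwoArrow ℝ).comp
      (EuclideanSpace.volume_preserving_symm_measurableEquiv_toLp (Fin 2))).setIntegral_preimage_emb
    ((MeasurableEquiv.toLp 2 (Fin 2 → ℝ)).symm.trans MeasurableEquiv.finTwoArrow).measurableEmbedding
    g (s ×ˢ t)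

/-- Duffy's map: it sends the unit square onto the triangle with vertices `0`, `e₀`, `e₁`,
collapsing the side `p 0 = 1` to `e₀`. -/
noncomputable def duffy (p : ℝ²) : ℝ² := !₂[p 0, p 1 * (1 - p 0)]

noncomputable def duffyDeriv (p : ℝ²) : ℝ² →L[ℝ] ℝ² :=
  (EuclideanSpace.proj 0).smulRight (EuclideanSpace.single 0 1) +
    ((1 - p 0) • EuclideanSpace.proj 1 - p 1 • EuclideanSpace.proj 0 : ℝ² →L[ℝ] ℝ).smulRight
      (EuclideanSpace.single 1 1)

theorem hasFDerivAt_duffy (p : ℝ²) : HasFDerivAt duffy (duffyDeriv p) p := by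
  have hduffy : duffy = fun q : ℝ² =>
      q 0 • EuclideanSpace.single 0 1 + (q 1 * (1 - q 0)) • EuclideanSpace.single 1 1 := by
    ext q i
    fin_cases i <;> simp [duffy]
  have h0 := (EuclideanSpace.proj (0 : Fin 2) : ℝ² →L[ℝ] ℝ).hasFDerivAt (x := p)
  have h1 := (EuclideanSpace.proj (1 : Fin 2) : ℝ² →L[ℝ] ℝ).hasFDerivAt (x := p)
  rw [hduffy]
  refine ((h0.smul_const _).add ((h1.mul ((hasFDerivAt_const 1 p).sub h0)).smul_const _))
    |>.congr_fderiv ?_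
  ext q i
  fin_cases i <;> simp [duffyDeriv]
  ring

theorem det_duffyDeriv (p : ℝ²) : (duffyDeriv p).det = 1 - p 0 := by
  rw [ContinuousLinearMap.det,
    ← LinearMap.det_toMatrix (EuclideanSpace.basisFun (Fin 2) ℝ).toBasis, Matrix.det_fin_two]
  simp [LinearMap.toMatrix_apply, duffyDeriv]

theorem injOn_duffy : InjOn duffy {p | p 0 ≠ 1} := by
  intro p hp q _ h
  have h0 : p 0 = q 0 := by simpa [duffy] using congrArg (· 0) h
  have h1 : p 1 * (1 - p 0) = q 1 * (1 - p 0) := by simpa [duffy, h0] using congrArg (· 1) h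
  have h1' := mul_right_cancel₀ (sub_ne_zero.2 (Ne.symm hp)) h1
  ext i
  fin_cases i <;> simpa

section Triangle

variable (z z' z'' : ℝ²)

noncomputable def edgeMap : ℝ² →L[ℝ] ℝ² :=
  (EuclideanSpace.proj 0).smulRight (z - z') + (EuclideanSpace.proj 1).smulRight (z'' - z')

/-- For fixed `t` this traces the segment `[b t, a t]` of the statement. -/
noncomputable def triangleChart (t σ : ℝ) : ℝ² := lineMap (lineMap z' z t) (lineMap z'' z t) σ

variable {z z' z''}

theorem injective_edgeMap (h : AffineIndependent ℝ ![z, z', z'']) :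
    Function.Injective (edgeMap z z' z'') := by
  refine (injective_iff_map_eq_zero _).2 fun q hq => ?_
  obtain ⟨h0, h1⟩ := LinearIndependent.pair_iff.1 h.linearIndependent_sub_three (q 0) (q 1)
    (by simpa [edgeMap] using hq)
  ext i
  fin_cases i <;> simpa

theorem det_edgeMap_ne_zero (h : AffineIndependent ℝ ![z, z', z'']) :
    (edgeMap z z' z'').det ≠ 0 := fun h0 =>
  LinearMap.det_eq_zero_iff_ker_ne_bot.1 h0 (LinearMap.ker_eq_bot.2 (injective_edgeMap h))

theorem triangleChart_eq (p : ℝ²) :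
    triangleChart z z' z'' (p 0) (p 1) = z' + edgeMap z z' z'' (duffy p) := by
  simp [triangleChart, edgeMap, duffy, lineMap_apply_module]
  module

theorem triangleChart_one (σ : ℝ) : triangleChart z z' z'' 1 σ = z := by
  simp [triangleChart]

theorem hasFDerivAt_triangleChart (p : ℝ²) :
    HasFDerivAt (fun p : ℝ² => triangleChart z z' z'' (p 0) (p 1))
      ((edgeMap z z' z'').comp (duffyDeriv p)) p := by
  simp only [triangleChart_eq]
  exact ((edgeMap z z' z'').hasFDerivAt.comp p (hasFDerivAt_duffy p)).const_add z'

theorem det_edgeMap_comp_duffyDeriv (p : ℝ²) :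
    ((edgeMap z z' z'').comp (duffyDeriv p)).det = (edgeMap z z' z'').det * (1 - p 0) :=
  (LinearMap.det_comp _ _).trans (congrArg _ (det_duffyDeriv p))

theorem injOn_triangleChart (h : AffineIndependent ℝ ![z, z', z'']) :
    InjOn (fun p : ℝ² => triangleChart z z' z'' (p 0) (p 1)) {p | p 0 ≠ 1} := by
  simp only [triangleChart_eq]
  exact ((add_right_injective z').comp (injective_edgeMap h)).comp_injOn injOn_duffy

theorem mem_convexHull_triangle_iff {x : ℝ²} :
    x ∈ convexHull ℝ {z, z', z''} ↔
      ∃ t ∈ Icc (0 : ℝ) 1, ∃ σ ∈ Icc (0 : ℝ) 1, triangleChart z z' z'' t σ = x := by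
  rw [convexHull_insert (insert_nonempty _ _), convexHull_pair, convexJoin_singleton_left]
  simp only [mem_iUnion₂, segment_symm ℝ z, segment_eq_image_lineMap, mem_image]
  constructor
  · rintro ⟨_, ⟨σ, hσ, rfl⟩, t, ht, rfl⟩
    exact ⟨t, ht, σ, hσ, by simp only [triangleChart, lineMap_apply_module]; module⟩
  · rintro ⟨t, ht, σ, hσ, rfl⟩
    exact ⟨_, ⟨σ, hσ, rfl⟩, t, ht, by simp only [triangleChart, lineMap_apply_module]; module⟩

theorem convexHull_triangle_ae_eq_image :
    convexHull ℝ {z, z', z''} =ᵐ[volume]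
      (fun p : ℝ² => triangleChart z z' z'' (p 0) (p 1)) ''
        {p | p 0 ∈ Ico 0 1 ∧ p 1 ∈ Icc 0 1} := by
  have himage : (fun p : ℝ² => triangleChart z z' z'' (p 0) (p 1)) ''
      {p | p 0 ∈ Ico 0 1 ∧ p 1 ∈ Icc 0 1} ⊆ convexHull ℝ {z, z', z''} := by
    rintro _ ⟨p, ⟨⟨h0, h1⟩, hσ⟩, rfl⟩
    exact mem_convexHull_triangle_iff.2 ⟨p 0, ⟨h0, h1.le⟩, p 1, hσ, rfl⟩
  rw [ae_eq_set, sdiff_eq_empty.2 himage, measure_empty]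
  refine ⟨measure_mono_null (fun x ⟨hx, hx'⟩ => ?_) (measure_singleton z), rfl⟩
  obtain ⟨t, ht, σ, hσ, rfl⟩ := mem_convexHull_triangle_iff.1 hx
  obtain rfl : t = 1 := by
    by_contra h
    exact hx' ⟨!₂[t, σ], by simpa using ⟨⟨ht.1, lt_of_le_of_ne ht.2 h⟩, hσ⟩, by simp⟩
  exact triangleChart_one σ

theorem setIntegral_convexHull_triangle {F : Type*} [NormedAddCommGroup F] [NormedSpace ℝ F]
    (h : AffineIndependent ℝ ![z, z', z'']) {f : ℝ² → F}
    (hf : ContinuousOn f (convexHull ℝ {z, z', z''})) :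
    ∫ x in convexHull ℝ {z, z', z''}, f x =
      |(edgeMap z z' z'').det| •
        ∫ t in Icc (0 : ℝ) 1, (1 - t) • ∫ σ in Icc (0 : ℝ) 1, f (triangleChart z z' z'' t σ) := by
  set s := {p : ℝ² | p 0 ∈ Ico 0 1 ∧ p 1 ∈ Icc 0 1}
  set g : ℝ × ℝ → F := fun q =>
    (|(edgeMap z z' z'').det| * (1 - q.1)) • f (triangleChart z z' z'' q.1 q.2)
  have hs : MeasurableSet s := by measurability
  have hg : IntegrableOn g (Ico (0 : ℝ) 1 ×ˢ Icc (0 : ℝ) 1) := by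
    refine ContinuousOn.integrableOn_compact (isCompact_Icc.prod isCompact_Icc) ?_ |>.mono_set
      (prod_mono Ico_subset_Icc_self subset_rfl)
    refine (Continuous.continuousOn (by fun_prop)).smul
      (hf.comp (by unfold triangleChart; fun_prop) fun q hq => ?_)
    exact mem_convexHull_triangle_iff.2 ⟨q.1, hq.1, q.2, hq.2, rfl⟩
  calc ∫ x in convexHull ℝ {z, z', z''}, f x
      = ∫ x in (fun p : ℝ² => triangleChart z z' z'' (p 0) (p 1)) '' s, f x :=
        setIntegral_congr_set convexHull_triangle_ae_eq_image
    _ = ∫ p in s, |((edgeMap z z' z'').comp (duffyDeriv p)).det| •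
          f (triangleChart z z' z'' (p 0) (p 1)) :=
        integral_image_eq_integral_abs_det_fderiv_smul volume hs
          (fun p _ => (hasFDerivAt_triangleChart p).hasFDerivWithinAt)
          ((injOn_triangleChart h).mono fun p hp => hp.1.2.ne) f
    _ = ∫ p in s, g (p 0, p 1) := by
        refine setIntegral_congr_fun hs fun p hp => ?_
        rw [det_edgeMap_comp_duffyDeriv, abs_mul, abs_of_nonneg (sub_nonneg.2 hp.1.2.le)]
    _ = ∫ q in Ico (0 : ℝ) 1 ×ˢ Icc (0 : ℝ) 1, g q := setIntegral_euclideanSpace_fin_two g _ _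
    _ = ∫ t in Ico (0 : ℝ) 1, ∫ σ in Icc (0 : ℝ) 1, g (t, σ) := setIntegral_prod g hg
    _ = ∫ t in Icc (0 : ℝ) 1, ∫ σ in Icc (0 : ℝ) 1, g (t, σ) :=
        setIntegral_congr_set Ico_ae_eq_Icc
    _ = _ := by simp only [g, mul_smul, integral_smul]

theorem volume_convexHull_triangle (h : AffineIndependent ℝ ![z, z', z'']) :
    (volume (convexHull ℝ {z, z', z''})).toReal = |(edgeMap z z' z'').det| / 2 := by
  have half : ∫ t in Icc (0 : ℝ) 1, (1 - t) = 1 / 2 := by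
    rw [integral_Icc_eq_integral_Ioc, ← intervalIntegral.integral_of_le zero_le_one,
      intervalIntegral.integral_sub intervalIntegrable_const intervalIntegral.intervalIntegrable_id]
    norm_num
  rw [← measureReal_def, div_eq_mul_one_div, ← half]
  simpa using setIntegral_convexHull_triangle h (f := fun _ => (1 : ℝ)) continuousOn_const

end Triangle

/-- The Fubini-type slicing identity behind the averaging argument for (4b):
with `a t = z'' + t(z - z'')` on `S'` and `b t = z' + t(z - z')` on `S''`,
for every `f` continuous on the triangle `T = conv {z, z', z''}`,
`∫₀¹ (∫_{[b t, a t]} f dH¹) dt = (|S| / (2|T|)) ⬝ ∫_T f`. -/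
theorem slicing_identity
    (z z' z'' : EuclideanSpace ℝ (Fin 2))
    (hind : AffineIndependent ℝ ![z, z', z''])
    (T : Set (EuclideanSpace ℝ (Fin 2)))
    (hT : T = convexHull ℝ {z, z', z''})
    (a b : ℝ → EuclideanSpace ℝ (Fin 2))
    (ha : ∀ t, a t = z'' + t • (z - z''))
    (hb : ∀ t, b t = z' + t • (z - z'))
    (f : EuclideanSpace ℝ (Fin 2) → ℝ)
    (hf : ContinuousOn f T) :
    ∫ t in Set.Icc (0 : ℝ) 1, (∫ x in segment ℝ (b t) (a t), f x ∂(μH[1])) =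
      (dist z' z'' / (2 * (volume T).toReal)) * ∫ x in T, f x := by
  subst hT
  obtain rfl : a = lineMap z'' z := funext fun t => by rw [ha, lineMap_apply_module', add_comm]
  obtain rfl : b = lineMap z' z := funext fun t => by rw [hb, lineMap_apply_module', add_comm]
  have hslice : ∀ t ∈ Icc (0 : ℝ) 1,
      ∫ x in segment ℝ (lineMap z' z t) (lineMap z'' z t), f x ∂μH[1] =
        dist z' z'' * ((1 - t) * ∫ σ in Icc (0 : ℝ) 1, f (triangleChart z z' z'' t σ)) :=
    fun t ht => by
      rw [setIntegral_segment_hausdorffMeasure, dist_lineMap_lineMap_same_right,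
        abs_of_nonneg (sub_nonneg.2 ht.2), smul_eq_mul, mul_assoc, mul_left_comm]
      rfl
  have hdet := abs_pos.2 (det_edgeMap_ne_zero hind)
  rw [setIntegral_congr_fun measurableSet_Icc hslice, integral_const_mul,
    setIntegral_convexHull_triangle hind hf, volume_convexHull_triangle hind]
  simp only [smul_eq_mul]
  field_simp
end

section
/- Let w : ℝ² → ℝ be continuously differentiable on an open set containing T. Then | |S'|⁻¹ ∫_{S'} w dH¹ − |S''|⁻¹ ∫_{S''} w dH¹ | ≤ (|S| / (2|T|)) · ∫_T |∇w(x)| dx. (This is the averaging estimate, a variant of Lemma 7.1 of [Kopt_17_NM], that the paper modifies to prove inequality (4b).) -/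
/-!
Parametrize the triangle on the unit square by
`Φ(t, s) = (1 - s) • ((1 - t) • z + t • z') + s • ((1 - t) • z + t • z'')`.
For fixed `t`, the segment `s ↦ Φ(t, s)` joins the points at parameter `t` of `S''` and `S'`
and has length `t |S|`, so by the fundamental theorem of calculus the difference of the two
edge averages is at most `|S| ∫∫ t |∇w(Φ(t, s))| ds dt`. The Jacobian of `Φ` is `t` times a
constant; testing the change of variables against `1` identifies that constant as `2 |T|`,
whence `∫∫ t |∇w(Φ)| = (2 |T|)⁻¹ ∫_T |∇w|`.
-/

open MeasureTheory Set AffineMap Module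
open scoped ENNReal

noncomputable section

variable {E F : Type*} [NormedAddCommGroup E] [NormedSpace ℝ E] [NormedAddCommGroup F]
  [NormedSpace ℝ F]

theorem restrict_hausdorffMeasure_segment_eq_map [MeasurableSpace E] [BorelSpace E] (a b : E) :
    (μH[1] : Measure E).restrict (segment ℝ a b) =
      (nndist a b : ℝ≥0∞) • (volume.restrict (Icc (0 : ℝ) 1)).map (lineMap a b) := by
  ext s hs
  rw [Measure.smul_apply, Measure.map_apply lineMap_continuous.measurable hs,
    Measure.restrict_apply hs, Measure.restrict_apply (lineMap_continuous.measurable hs),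
    segment_eq_image_lineMap, ← image_preimage_inter, hausdorffMeasure_lineMap_image,
    hausdorffMeasure_real, ENNReal.smul_def]

theorem integral_segment_hausdorffMeasure_s4 [MeasurableSpace E] [BorelSpace E] {a b : E}
    (hab : a ≠ b) (f : E → F) :
    ∫ x in segment ℝ a b, f x ∂μH[1] = dist a b • ∫ t in Icc (0 : ℝ) 1, f (lineMap a b t) := by
  have hemb : MeasurableEmbedding (lineMap a b : ℝ → E) :=
    lineMap_continuous.measurableEmbedding (lineMap_injective ℝ hab)
  rw [restrict_hausdorffMeasure_segment_eq_map, integral_smul_measure, hemb.integral_map,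
    ENNReal.coe_toReal, coe_nndist]

theorem norm_sub_le_dist_mul_integral_norm_fderiv [CompleteSpace F] {f : E → F} {U : Set E}
    (hU : IsOpen U) (hf : ContDiffOn ℝ 1 f U) {a b : E} (hab : segment ℝ a b ⊆ U) :
    ‖f b - f a‖ ≤ dist a b * ∫ s in Icc (0 : ℝ) 1, ‖fderiv ℝ f (lineMap a b s)‖ := by
  have hmem : MapsTo (lineMap a b : ℝ → E) (Icc 0 1) U := fun s hs =>
    hab (segment_eq_image_lineMap ℝ a b ▸ mem_image_of_mem _ hs)
  have hcont : ContinuousOn (fun s : ℝ => fderiv ℝ f (lineMap a b s)) (Icc 0 1) :=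
    (hf.continuousOn_fderiv_of_isOpen hU le_rfl).comp lineMap_continuous.continuousOn hmem
  have hderiv : ∀ s ∈ uIcc (0 : ℝ) 1,
      HasDerivAt (fun s : ℝ => f (lineMap a b s)) (fderiv ℝ f (lineMap a b s) (b - a)) s := by
    intro s hs
    rw [uIcc_of_le zero_le_one] at hs
    exact ((hf.differentiableOn one_ne_zero _ (hmem hs)).differentiableAt
      (hU.mem_nhds (hmem hs))).hasFDerivAt.comp_hasDerivAt s hasDerivAt_lineMap
  have hftc := intervalIntegral.integral_eq_sub_of_hasDerivAt hderiv
    ((hcont.clm_apply continuousOn_const).intervalIntegrable_of_Icc zero_le_one)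
  rw [lineMap_apply_one, lineMap_apply_zero, intervalIntegral.integral_of_le zero_le_one,
    ← integral_Icc_eq_integral_Ioc] at hftc
  rw [← hftc, dist_eq_norm', ← integral_const_mul]
  refine norm_integral_le_of_norm_le
    ((continuousOn_const.mul hcont.norm).integrableOn_compact isCompact_Icc) ?_
  filter_upwards with s
  rw [mul_comm]
  exact (fderiv ℝ f (lineMap a b s)).le_opNorm (b - a)

theorem measure_convexHull_pos [FiniteDimensional ℝ E] [MeasurableSpace E] [BorelSpace E]
    (μ : Measure E) [μ.IsAddHaarMeasure] {ι : Type*} [Fintype ι] {p : ι → E}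
    (hp : AffineIndependent ℝ p) (hcard : Fintype.card ι = finrank ℝ E + 1) :
    0 < μ (convexHull ℝ (range p)) :=
  μ.measure_pos_of_nonempty_interior <| interior_convexHull_nonempty_iff_affineSpan_eq_top.2 <|
    hp.affineSpan_eq_top_iff_card_eq_finrank_add_one.2 hcard

theorem dist_lineMap_lineMap_of_left_eq (a b c : E) (t : ℝ) :
    dist (lineMap a b t) (lineMap a c t) = |t| * dist b c := by
  rw [dist_eq_norm, dist_eq_norm, lineMap_apply_module', lineMap_apply_module',
    show t • (b - a) + a - (t • (c - a) + a) = t • (b - c) by module, norm_smul, Real.norm_eq_abs]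

def triangleParam (a b c : E) (p : ℝ × ℝ) : E := lineMap a (lineMap b c p.2) p.1

theorem triangleParam_eq (a b c : E) (p : ℝ × ℝ) :
    triangleParam a b c p = a + p.1 • (b - a) + (p.1 * p.2) • (c - b) := by
  simp only [triangleParam, lineMap_apply_module']
  module

theorem triangleParam_eq_lineMap_lineMap (a b c : E) (p : ℝ × ℝ) :
    triangleParam a b c p = lineMap (lineMap a b p.1) (lineMap a c p.1) p.2 := by
  simp only [triangleParam, lineMap_apply_module']
  module

def triangleWeights (p : ℝ × ℝ) : Fin 3 → ℝ := ![1 - p.1, p.1 * (1 - p.2), p.1 * p.2]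

theorem sum_triangleWeights (p : ℝ × ℝ) : ∑ i, triangleWeights p i = 1 := by
  simp only [triangleWeights, Fin.sum_univ_three, Matrix.cons_val_zero, Matrix.cons_val_one,
    Matrix.cons_val_two, Matrix.tail_cons, Matrix.head_cons]
  ring

theorem triangleParam_eq_affineCombination (a b c : E) (p : ℝ × ℝ) :
    triangleParam a b c p = Finset.univ.affineCombination ℝ ![a, b, c] (triangleWeights p) := by
  rw [Finset.affineCombination_eq_linear_combination _ _ _ (sum_triangleWeights p),
    Fin.sum_univ_three, triangleParam_eq]
  simp only [triangleWeights, Matrix.cons_val_zero, Matrix.cons_val_one, Matrix.cons_val_two,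
    Matrix.tail_cons, Matrix.head_cons]
  module

theorem map_triangleParam {E' : Type*} [NormedAddCommGroup E'] [NormedSpace ℝ E']
    (g : E →ₗ[ℝ] E') (a b c : E) (p : ℝ × ℝ) :
    g (triangleParam a b c p) = triangleParam (g a) (g b) (g c) p := by
  simp only [triangleParam_eq, map_add, map_smul, map_sub]

theorem continuous_triangleParam (a b c : E) : Continuous (triangleParam a b c) := by
  unfold triangleParam
  fun_prop

theorem injOn_triangleParam {a b c : E} (h : AffineIndependent ℝ ![a, b, c]) :
    InjOn (triangleParam a b c) (Ioi 0 ×ˢ univ) := by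
  intro p hp q _ hpq
  rw [triangleParam_eq_affineCombination, triangleParam_eq_affineCombination] at hpq
  have hw := (affineIndependent_iff_eq_of_fintype_affineCombination_eq ℝ _).1 h _ _
    (sum_triangleWeights p) (sum_triangleWeights q) hpq
  have h₁ : p.1 = q.1 := by simpa [triangleWeights] using congrFun hw 0
  have h₂ : p.1 * p.2 = q.1 * q.2 := by simpa [triangleWeights] using congrFun hw 2
  rw [← h₁] at h₂
  exact Prod.ext h₁ (mul_left_cancel₀ (ne_of_gt hp.1) h₂)

theorem image_triangleParam_Icc (a b c : E) :
    triangleParam a b c '' (Icc 0 1 ×ˢ Icc 0 1) = convexHull ℝ {a, b, c} := by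
  rw [convexHull_insert (insert_nonempty _ _), convexHull_pair]
  ext x
  simp only [mem_convexJoin, mem_singleton_iff, exists_eq_left, segment_eq_image_lineMap,
    mem_image, mem_prod, Prod.exists, triangleParam]
  constructor
  · rintro ⟨t, s, ⟨ht, hs⟩, rfl⟩
    exact ⟨_, ⟨s, hs, rfl⟩, t, ht, rfl⟩
  · rintro ⟨_, ⟨s, hs, rfl⟩, t, ht, rfl⟩
    exact ⟨t, s, ⟨ht, hs⟩, rfl⟩

def fderivTriangleParam (a b c : E) (p : ℝ × ℝ) : ℝ × ℝ →L[ℝ] E :=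
  (ContinuousLinearMap.fst ℝ ℝ ℝ).smulRight (b - a) +
    (p.1 • ContinuousLinearMap.snd ℝ ℝ ℝ + p.2 • ContinuousLinearMap.fst ℝ ℝ ℝ).smulRight (c - b)

theorem fderivTriangleParam_apply (a b c : E) (p q : ℝ × ℝ) :
    fderivTriangleParam a b c p q = q.1 • (b - a) + (p.1 * q.2 + p.2 * q.1) • (c - b) := by
  simp [fderivTriangleParam]

theorem hasFDerivAt_triangleParam (a b c : E) (p : ℝ × ℝ) :
    HasFDerivAt (triangleParam a b c) (fderivTriangleParam a b c p) p := by
  rw [show triangleParam a b c = _ from funext (triangleParam_eq a b c)]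
  exact ((hasFDerivAt_fst.smul_const (b - a)).const_add a).add
    (((hasFDerivAt_fst (𝕜 := ℝ) (p := p)).mul (hasFDerivAt_snd (𝕜 := ℝ))).smul_const (c - b))

section EdgeAverages

variable [CompleteSpace F] {f : E → F} {U : Set E} {a b c : E}

theorem norm_sub_lineMap_le_integral (hU : IsOpen U) (hf : ContDiffOn ℝ 1 f U)
    (hT : convexHull ℝ {a, b, c} ⊆ U) {t : ℝ} (ht : t ∈ Icc (0 : ℝ) 1) :
    ‖f (lineMap a c t) - f (lineMap a b t)‖ ≤
      dist b c * ∫ s in Icc (0 : ℝ) 1, t * ‖fderiv ℝ f (triangleParam a b c (t, s))‖ := by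
  have hmem : ∀ d ∈ ({b, c} : Set E), lineMap a d t ∈ convexHull ℝ {a, b, c} := fun d hd =>
    (convex_convexHull ℝ _).lineMap_mem (subset_convexHull ℝ _ (by simp))
      (subset_convexHull ℝ _ (by aesop)) ht
  have hseg := (convex_convexHull ℝ _).segment_subset (hmem b (by simp)) (hmem c (by simp))
  refine (norm_sub_le_dist_mul_integral_norm_fderiv hU hf (hseg.trans hT)).trans_eq ?_
  simp only [dist_lineMap_lineMap_of_left_eq, abs_of_nonneg ht.1, integral_const_mul,
    triangleParam_eq_lineMap_lineMap]
  ring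

theorem norm_integral_lineMap_sub_le (hU : IsOpen U) (hf : ContDiffOn ℝ 1 f U)
    (hT : convexHull ℝ {a, b, c} ⊆ U) :
    ‖(∫ t in Icc (0 : ℝ) 1, f (lineMap a c t)) - ∫ t in Icc (0 : ℝ) 1, f (lineMap a b t)‖ ≤
      dist b c * ∫ p in Icc (0 : ℝ) 1 ×ˢ Icc (0 : ℝ) 1,
        p.1 * ‖fderiv ℝ f (triangleParam a b c p)‖ := by
  have hedge : ∀ d ∈ ({b, c} : Set E),
      IntegrableOn (fun t : ℝ => f (lineMap a d t)) (Icc (0 : ℝ) 1) := fun d hd =>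
    ((hf.continuousOn.mono hT).comp lineMap_continuous.continuousOn fun t ht =>
      (convex_convexHull ℝ _).lineMap_mem (subset_convexHull ℝ _ (by simp))
        (subset_convexHull ℝ _ (by aesop)) ht).integrableOn_compact isCompact_Icc
  have hΦ : MapsTo (triangleParam a b c) (Icc 0 1 ×ˢ Icc 0 1) U := fun p hp =>
    hT (image_triangleParam_Icc a b c ▸ mem_image_of_mem _ hp)
  have hg : IntegrableOn (fun p : ℝ × ℝ => p.1 * ‖fderiv ℝ f (triangleParam a b c p)‖)
      (Icc 0 1 ×ˢ Icc 0 1) :=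
    (continuousOn_fst.mul (((hf.continuousOn_fderiv_of_isOpen hU le_rfl).comp
      (continuous_triangleParam a b c).continuousOn hΦ).norm)).integrableOn_compact
      (isCompact_Icc.prod isCompact_Icc)
  have hg' : Integrable (fun p : ℝ × ℝ => p.1 * ‖fderiv ℝ f (triangleParam a b c p)‖)
      ((volume.restrict (Icc 0 1)).prod (volume.restrict (Icc 0 1))) := by
    rw [Measure.prod_restrict, ← Measure.volume_eq_prod]
    exact hg
  rw [← integral_sub (hedge c (by simp)) (hedge b (by simp)), Measure.volume_eq_prod,
    setIntegral_prod _ hg, ← integral_const_mul]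
  refine norm_integral_le_of_norm_le (hg'.integral_prod_left.const_mul _) ?_
  exact (ae_restrict_iff' measurableSet_Icc).2 <| .of_forall fun t ht =>
    norm_sub_lineMap_le_integral hU hf hT ht

end EdgeAverages

theorem Ioo_prod_Ioo_ae_eq_Icc_prod_Icc (a b c d : ℝ) :
    (Ioo a b ×ˢ Ioo c d : Set (ℝ × ℝ)) =ᵐ[volume] Icc a b ×ˢ Icc c d := by
  have h := interior_ae_eq_of_null_frontier
    (((convex_Icc a b).prod (convex_Icc c d)).addHaar_frontier volume)
  rwa [interior_prod_eq, interior_Icc, interior_Icc] at h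

theorem setIntegral_fst_Icc_prod_Icc : ∫ p in Icc (0 : ℝ) 1 ×ˢ Icc (0 : ℝ) 1, p.1 = 1 / 2 := by
  have h := setIntegral_prod_mul (μ := volume) (ν := volume) (fun t : ℝ => t)
    (fun _ : ℝ => (1 : ℝ)) (Icc 0 1) (Icc 0 1)
  simp only [mul_one, Measure.volume_eq_prod] at h ⊢
  rw [h, integral_Icc_eq_integral_Ioc, ← intervalIntegral.integral_of_le zero_le_one, integral_id]
  simp

theorem det_fderivTriangleParam (a b c p : ℝ × ℝ) :
    (fderivTriangleParam a b c p).det = p.1 * ((b - a).1 * (c - b).2 - (b - a).2 * (c - b).1) := by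
  rw [ContinuousLinearMap.det, ← LinearMap.det_toMatrix (Basis.finTwoProd ℝ),
    Matrix.det_fin_two]
  simp only [LinearMap.toMatrix_apply, ContinuousLinearMap.coe_coe, fderivTriangleParam_apply,
    Basis.finTwoProd_zero, Basis.finTwoProd_one, Basis.coe_finTwoProd_repr, Matrix.cons_val_zero,
    Matrix.cons_val_one, Prod.fst_add, Prod.snd_add, Prod.smul_fst, Prod.smul_snd, smul_eq_mul]
  ring

theorem image_triangleParam_Ioo_ae_eq (a b c : ℝ × ℝ) :
    triangleParam a b c '' (Ioo 0 1 ×ˢ Ioo 0 1) =ᵐ[volume] convexHull ℝ {a, b, c} := by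
  rw [← image_triangleParam_Icc, ae_eq_set,
    sdiff_eq_empty.2 (image_mono (prod_mono Ioo_subset_Icc_self Ioo_subset_Icc_self))]
  refine ⟨measure_empty, measure_mono_null
    (t := triangleParam a b c '' (Icc 0 1 ×ˢ Icc 0 1 \ Ioo 0 1 ×ˢ Ioo 0 1)) ?_ ?_⟩
  · exact fun _ ⟨⟨p, hp, hx⟩, hn⟩ => ⟨p, ⟨hp, fun h => hn ⟨p, h, hx⟩⟩, hx⟩
  · exact addHaar_image_eq_zero_of_differentiableOn_of_addHaar_eq_zero volume
      (fun p _ => (hasFDerivAt_triangleParam a b c p).differentiableAt.differentiableWithinAt)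
      (ae_eq_set.1 (Ioo_prod_Ioo_ae_eq_Icc_prod_Icc 0 1 0 1)).2

theorem setIntegral_convexHull_eq_abs_mul {a b c : ℝ × ℝ} (h : AffineIndependent ℝ ![a, b, c])
    (f : ℝ × ℝ → F) :
    ∫ x in convexHull ℝ {a, b, c}, f x =
      |(b - a).1 * (c - b).2 - (b - a).2 * (c - b).1| •
        ∫ p in Icc 0 1 ×ˢ Icc 0 1, p.1 • f (triangleParam a b c p) := by
  have hinj : InjOn (triangleParam a b c) (Ioo 0 1 ×ˢ Ioo 0 1) :=
    (injOn_triangleParam h).mono (prod_mono Ioo_subset_Ioi_self (subset_univ _))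
  rw [← setIntegral_congr_set (image_triangleParam_Ioo_ae_eq a b c),
    integral_image_eq_integral_abs_det_fderiv_smul volume (measurableSet_Ioo.prod measurableSet_Ioo)
      (fun p _ => (hasFDerivAt_triangleParam a b c p).hasFDerivWithinAt) hinj,
    setIntegral_congr_set (Ioo_prod_Ioo_ae_eq_Icc_prod_Icc 0 1 0 1), ← integral_smul]
  refine setIntegral_congr_fun (measurableSet_Icc.prod measurableSet_Icc) fun p hp => ?_
  rw [det_fderivTriangleParam, abs_mul, abs_of_nonneg hp.1.1, smul_smul, mul_comm]

theorem setIntegral_convexHull_eq {a b c : ℝ × ℝ} (h : AffineIndependent ℝ ![a, b, c])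
    (f : ℝ × ℝ → F) :
    ∫ x in convexHull ℝ {a, b, c}, f x =
      (2 * (volume (convexHull ℝ {a, b, c})).toReal) •
        ∫ p in Icc 0 1 ×ˢ Icc 0 1, p.1 • f (triangleParam a b c p) := by
  have hvol := setIntegral_convexHull_eq_abs_mul h (fun _ => (1 : ℝ))
  simp only [setIntegral_const, smul_eq_mul, mul_one, setIntegral_fst_Icc_prod_Icc] at hvol
  rw [setIntegral_convexHull_eq_abs_mul h f, ← measureReal_def, hvol]
  ring_nf

local notation "ℝ²" => EuclideanSpace ℝ (Fin 2)

def EuclideanSpace.equivProd : ℝ² ≃L[ℝ] ℝ × ℝ :=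
  (PiLp.continuousLinearEquiv 2 ℝ fun _ : Fin 2 => ℝ).trans (ContinuousLinearEquiv.finTwoArrow ℝ ℝ)

theorem EuclideanSpace.measurePreserving_equivProd : MeasurePreserving EuclideanSpace.equivProd :=
  (volume_preserving_finTwoArrow ℝ).comp (PiLp.volume_preserving_ofLp (Fin 2))

theorem EuclideanSpace.setIntegral_convexHull_eq {z z' z'' : ℝ²}
    (h : AffineIndependent ℝ ![z, z', z'']) (f : ℝ² → F) :
    ∫ x in convexHull ℝ {z, z', z''}, f x =
      (2 * (volume (convexHull ℝ {z, z', z''})).toReal) •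
        ∫ p in Icc 0 1 ×ˢ Icc 0 1, p.1 • f (triangleParam z z' z'' p) := by
  set e := EuclideanSpace.equivProd
  have hmp : MeasurePreserving e := EuclideanSpace.measurePreserving_equivProd
  have hemb : MeasurableEmbedding e := e.toHomeomorph.measurableEmbedding
  have hT : e ⁻¹' (e '' convexHull ℝ {z, z', z''}) = convexHull ℝ {z, z', z''} :=
    preimage_image_eq _ e.injective
  have he : e '' convexHull ℝ {z, z', z''} = convexHull ℝ {e z, e z', e z''} := by
    simpa [image_insert_eq] using (e : ℝ² →ₗ[ℝ] ℝ × ℝ).image_convexHull {z, z', z''}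
  have h' : AffineIndependent ℝ ![e z, e z', e z''] := by
    have h' := h.map' (e : ℝ² →ₗ[ℝ] ℝ × ℝ).toAffineMap e.injective
    have hc : (e : ℝ² →ₗ[ℝ] ℝ × ℝ).toAffineMap ∘ ![z, z', z''] = ![e z, e z', e z''] := by
      funext i; fin_cases i <;> rfl
    rwa [hc] at h'
  have hint := hmp.setIntegral_preimage_emb hemb (fun y => f (e.symm y))
    (e '' convexHull ℝ {z, z', z''})
  have hvol := hmp.measure_preimage_emb hemb (e '' convexHull ℝ {z, z', z''})
  simp only [e.symm_apply_apply, hT] at hint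
  rw [hT] at hvol
  rw [hint, hvol, he, _root_.setIntegral_convexHull_eq h']
  congr with p
  have := map_triangleParam (e.symm : ℝ × ℝ →ₗ[ℝ] ℝ²) (e z) (e z') (e z'') p
  simp only [ContinuousLinearEquiv.toLinearEquiv_symm, LinearEquiv.coe_coe,
    ContinuousLinearEquiv.coe_symm_toLinearEquiv, e.symm_apply_apply] at this
  rw [this]

end

/-- The averaging estimate (a variant of Lemma 7.1 of [Kopt_17_NM]) used to prove (4b):
for the triangle `T = conv {z, z', z''}` with edges `S = [z', z'']`, `S' = [z, z'']`,
`S'' = [z, z']`, and `w` continuously differentiable on an open set containing `T`,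
`| |S'|⁻¹ ∫_{S'} w dH¹ − |S''|⁻¹ ∫_{S''} w dH¹ | ≤ (|S| / (2|T|)) ⬝ ∫_T |∇w|`. -/
theorem averaging_estimate
    (z z' z'' : EuclideanSpace ℝ (Fin 2))
    (hind : AffineIndependent ℝ ![z, z', z''])
    (T : Set (EuclideanSpace ℝ (Fin 2)))
    (hT : T = convexHull ℝ {z, z', z''})
    (w : EuclideanSpace ℝ (Fin 2) → ℝ)
    (U : Set (EuclideanSpace ℝ (Fin 2)))
    (hU : IsOpen U) (hTU : T ⊆ U) (hw : ContDiffOn ℝ 1 w U) :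
    |(dist z z'')⁻¹ * (∫ x in segment ℝ z z'', w x ∂(μH[1])) -
        (dist z z')⁻¹ * (∫ x in segment ℝ z z', w x ∂(μH[1]))| ≤
      (dist z' z'' / (2 * (volume T).toReal)) * ∫ x in T, ‖gradient w x‖ := by
  subst hT
  have hz' : z ≠ z' := hind.injective.ne (by decide : (0 : Fin 3) ≠ 1)
  have hz'' : z ≠ z'' := hind.injective.ne (by decide : (0 : Fin 3) ≠ 2)
  have hvol : 0 < (volume (convexHull ℝ {z, z', z''})).toReal := by
    have hpos := measure_convexHull_pos volume hind (by simp)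
    rw [Matrix.range_cons, Matrix.range_cons_cons_empty, singleton_union] at hpos
    exact ENNReal.toReal_pos hpos.ne' ((toFinite _).isCompact_convexHull ℝ).measure_lt_top.ne
  rw [integral_segment_hausdorffMeasure_s4 hz'', integral_segment_hausdorffMeasure_s4 hz', smul_eq_mul,
    smul_eq_mul, inv_mul_cancel_left₀ (dist_ne_zero.2 hz''),
    inv_mul_cancel_left₀ (dist_ne_zero.2 hz'), EuclideanSpace.setIntegral_convexHull_eq hind]
  simp only [gradient, LinearIsometryEquiv.norm_map, smul_eq_mul]
  calc _ ≤ dist z' z'' * ∫ p in Icc (0 : ℝ) 1 ×ˢ Icc (0 : ℝ) 1,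
        p.1 * ‖fderiv ℝ w (triangleParam z z' z'' p)‖ := norm_integral_lineMap_sub_le hU hw hTU
    _ = _ := by field_simp
end
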